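/- arXiv:1510.08290 — 6 statements merged into one kernel-verified Lean document; each statement's English description precedes it below -/
import Mathlib

section
/- Let s* ≥ 2 and let F be a real-valued random variable with E[F] = 0. If log E[exp(ν F)] ≤ |ν|^{s*} for all |ν| ≥ 1, then there exists a constant C (depending only on s*) such that log E[exp(ν F)] ≤ C(ν² + |ν|^{s*}) for all ν ∈ ℝ. -/
/-!
For `|ν| ≥ 1` the hypothesis already gives the bound. For `|ν| ≤ 1` we use the pointwise
inequality `exp x ≤ 1 + x + x ^ 2 * exp |x|` with `x = ν F`, and absorb the remainder via
`F ^ 2 * exp |ν F| ≤ 4 * exp (2 |F|) ≤ 4 (exp (2 F) + exp (-2 F))`. Taking expectations and using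
`E[F] = 0`, `E[exp (ν F)] ≤ 1 + 4 ν ^ 2 (E[exp (2 F)] + E[exp (-2 F)]) ≤ 1 + 8 exp (2 ^ s*) ν ^ 2`,
where the last step is the hypothesis at `ν = ± 2`; finally `log y ≤ y - 1`.
-/

open MeasureTheory ProbabilityTheory Real

namespace Real

lemma exp_le_one_add_add_sq_mul_exp_abs (x : ℝ) : exp x ≤ 1 + x + x ^ 2 * exp |x| := by
  have h_one_sub : exp x * (1 - x) ≤ 1 := by
    have := mul_le_mul_of_nonneg_left (add_one_le_exp (-x)) (exp_pos x).le
    rw [← exp_add, add_neg_cancel, exp_zero] at this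
    linarith
  rcases le_or_gt 0 x with hx | hx
  · rw [abs_of_nonneg hx]
    have : exp x ≤ 1 + x * exp x := by nlinarith
    nlinarith [mul_le_mul_of_nonneg_left this hx]
  · -- `exp x ≤ 1 / (1 - x) ≤ 1 + x + x ^ 2`, since `(1 + x + x ^ 2) (1 - x) = 1 - x ^ 3 ≥ 1`
    have h_quad : exp x ≤ 1 + x + x ^ 2 := by
      have : 1 ≤ (1 + x + x ^ 2) * (1 - x) := by nlinarith [pow_pos (neg_pos.mpr hx) 3]
      nlinarith
    nlinarith [one_le_exp (abs_nonneg x), sq_nonneg x]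

lemma sq_le_four_mul_exp_abs (x : ℝ) : x ^ 2 ≤ 4 * exp |x| := by
  have h := add_one_le_exp (|x| / 2)
  have h_sq : exp |x| = exp (|x| / 2) ^ 2 := by
    rw [← exp_nat_mul]
    ring_nf
  nlinarith [abs_nonneg x, sq_abs x]

lemma exp_abs_le_exp_add_exp_neg (x : ℝ) : exp |x| ≤ exp x + exp (-x) := by
  rcases abs_cases x with ⟨h, _⟩ | ⟨h, _⟩ <;> rw [h] <;> linarith [exp_pos x, exp_pos (-x)]

lemma exp_mul_le_of_abs_le_one {t : ℝ} (ht : |t| ≤ 1) (y : ℝ) :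
    exp (t * y) ≤ 1 + t * y + 4 * t ^ 2 * (exp (2 * y) + exp (-2 * y)) := by
  have h_exp : exp |t * y| ≤ exp |y| := by
    rw [exp_le_exp, abs_mul]
    exact mul_le_of_le_one_left (abs_nonneg y) ht
  have h_rem : y ^ 2 * exp |t * y| ≤ 4 * (exp (2 * y) + exp (-2 * y)) :=
    calc y ^ 2 * exp |t * y| ≤ 4 * exp |y| * exp |y| :=
          mul_le_mul (sq_le_four_mul_exp_abs y) h_exp (exp_pos _).le (by positivity)
      _ = 4 * exp |2 * y| := by
          rw [mul_assoc, ← exp_add, abs_mul, abs_two, two_mul]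
      _ ≤ 4 * (exp (2 * y) + exp (-2 * y)) := by
          rw [neg_mul]
          gcongr
          exact exp_abs_le_exp_add_exp_neg (2 * y)
  calc exp (t * y) ≤ 1 + t * y + (t * y) ^ 2 * exp |t * y| :=
        exp_le_one_add_add_sq_mul_exp_abs _
    _ = 1 + t * y + t ^ 2 * (y ^ 2 * exp |t * y|) := by ring
    _ ≤ 1 + t * y + 4 * t ^ 2 * (exp (2 * y) + exp (-2 * y)) := by
        nlinarith [mul_le_mul_of_nonneg_left h_rem (sq_nonneg t)]

end Real

namespace ProbabilityTheory

variable {Ω : Type*} [MeasurableSpace Ω] {μ : Measure Ω} [IsProbabilityMeasure μ]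
  {X : Ω → ℝ} {t : ℝ}

lemma mgf_le_one_add_sq_mul_of_integral_eq_zero (hX : Integrable X μ) (h_mean : μ[X] = 0)
    (h_two : Integrable (fun ω ↦ exp (2 * X ω)) μ)
    (h_neg_two : Integrable (fun ω ↦ exp (-2 * X ω)) μ) (ht : |t| ≤ 1) :
    mgf X μ t ≤ 1 + 4 * t ^ 2 * (mgf X μ 2 + mgf X μ (-2)) := by
  obtain ⟨ht_lower, ht_upper⟩ := abs_le.mp ht
  have h_t : Integrable (fun ω ↦ exp (t * X ω)) μ :=
    integrable_exp_mul_of_le_of_le h_neg_two h_two (by linarith) (by linarith)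
  have h_lin : Integrable (fun ω ↦ 1 + t * X ω) μ := (integrable_const 1).add (hX.const_mul t)
  have h_rem : Integrable (fun ω ↦ 4 * t ^ 2 * (exp (2 * X ω) + exp (-2 * X ω))) μ :=
    (h_two.add h_neg_two).const_mul _
  calc mgf X μ t
      ≤ ∫ ω, (1 + t * X ω) + 4 * t ^ 2 * (exp (2 * X ω) + exp (-2 * X ω)) ∂μ :=
        integral_mono h_t (h_lin.add h_rem) fun ω ↦ exp_mul_le_of_abs_le_one ht (X ω)
    _ = 1 + 4 * t ^ 2 * (mgf X μ 2 + mgf X μ (-2)) := by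
        rw [integral_add h_lin h_rem, integral_add (integrable_const 1) (hX.const_mul t),
          integral_const_mul, integral_const_mul, integral_add h_two h_neg_two, h_mean]
        simp [mgf]

lemma cgf_le_sq_mul_of_integral_eq_zero (hX : Integrable X μ) (h_mean : μ[X] = 0)
    (h_two : Integrable (fun ω ↦ exp (2 * X ω)) μ)
    (h_neg_two : Integrable (fun ω ↦ exp (-2 * X ω)) μ) (ht : |t| ≤ 1) :
    cgf X μ t ≤ 4 * t ^ 2 * (mgf X μ 2 + mgf X μ (-2)) := by
  obtain ⟨ht_lower, ht_upper⟩ := abs_le.mp ht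
  have h_pos : 0 < mgf X μ t :=
    mgf_pos (integrable_exp_mul_of_le_of_le h_neg_two h_two (by linarith) (by linarith))
  have := mgf_le_one_add_sq_mul_of_integral_eq_zero hX h_mean h_two h_neg_two ht
  rw [cgf]
  linarith [log_le_sub_one_of_pos h_pos]

end ProbabilityTheory

theorem stmt_0_general (sStar : ℝ) :
    ∃ C : ℝ, 0 < C ∧
      ∀ {Ω : Type} [MeasurableSpace Ω] (μ : Measure Ω) [IsProbabilityMeasure μ] (F : Ω → ℝ),
        Integrable F μ →
        (∀ ν : ℝ, Integrable (fun ω => Real.exp (ν * F ω)) μ) →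
        (∫ ω, F ω ∂μ) = 0 →
        (∀ ν : ℝ, 1 ≤ |ν| →
          Real.log (∫ ω, Real.exp (ν * F ω) ∂μ) ≤ |ν| ^ sStar) →
        ∀ ν : ℝ, Real.log (∫ ω, Real.exp (ν * F ω) ∂μ) ≤ C * (ν ^ 2 + |ν| ^ sStar) := by
  have h_one_le : 1 ≤ exp (2 ^ sStar) := one_le_exp (by positivity)
  refine ⟨8 * exp (2 ^ sStar), by positivity, ?_⟩
  intro Ω _ μ _ F hF h_int h_mean h_large ν
  change cgf F μ ν ≤ _
  have h_cgf : ∀ t, 1 ≤ |t| → cgf F μ t ≤ |t| ^ sStar := h_large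
  have h_rpow : 0 ≤ |ν| ^ sStar := by positivity
  have h_mgf_le (t : ℝ) (ht : |t| = 2) : mgf F μ t ≤ exp (2 ^ sStar) := by
    rw [← ht, ← log_le_iff_le_exp (mgf_pos (h_int t))]
    exact h_cgf t (by linarith)
  rcases le_or_gt 1 |ν| with hν | hν
  · nlinarith [h_cgf ν hν, sq_nonneg ν]
  · have h_two := h_mgf_le 2 (by norm_num)
    have h_neg_two := h_mgf_le (-2) (by norm_num)
    calc cgf F μ ν ≤ 4 * ν ^ 2 * (mgf F μ 2 + mgf F μ (-2)) :=
          cgf_le_sq_mul_of_integral_eq_zero hF h_mean (h_int 2) (h_int (-2)) hν.le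
      _ ≤ 8 * exp (2 ^ sStar) * (ν ^ 2 + |ν| ^ sStar) := by
          nlinarith [sq_nonneg ν]

/-- If a centered random variable `F` satisfies `log E[exp(ν F)] ≤ |ν|^{s*}` for all `|ν| ≥ 1`
(with `s* ≥ 2`), then `log E[exp(ν F)] ≤ C (ν² + |ν|^{s*})` for all `ν`, with `C = C(s*)`. -/
theorem stmt_0 (sStar : ℝ) (hs : 2 ≤ sStar) :
    ∃ C : ℝ, 0 < C ∧
      ∀ {Ω : Type} [MeasurableSpace Ω] (μ : Measure Ω) [IsProbabilityMeasure μ] (F : Ω → ℝ),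
        Integrable F μ →
        (∀ ν : ℝ, Integrable (fun ω => Real.exp (ν * F ω)) μ) →
        (∫ ω, F ω ∂μ) = 0 →
        (∀ ν : ℝ, 1 ≤ |ν| →
          Real.log (∫ ω, Real.exp (ν * F ω) ∂μ) ≤ |ν| ^ sStar) →
        ∀ ν : ℝ, Real.log (∫ ω, Real.exp (ν * F ω) ∂μ) ≤ C * (ν ^ 2 + |ν| ^ sStar) :=
  stmt_0_general sStar
end

section
/- Let η_R(x) = R^{−d} exp(−|x|/R) on ℝ^d and let G_r denote the centered Gaussian kernel of scale r, G_r(x) = r^{−d}(2π)^{−d/2} exp(−|x/r|²/2). For any nonnegative measurable function f and scales r ≤ R/2, one has ∫ η_R (f * G_r) ≤ C ∫ η_R f and ∫ η_R f ≤ C ∫ η_R (f * G_r), with a constant C depending only on d. -/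
open MeasureTheory
open scoped ENNReal

/-- The exponential localization kernel `η_R(x) = R^{−d} exp(−|x|/R)`. -/
noncomputable def expKer (d : ℕ) (R : ℝ) (x : EuclideanSpace ℝ (Fin d)) : ℝ :=
  R ^ (-(d : ℝ)) * Real.exp (-‖x‖ / R)

/-- The Gaussian kernel `G_r(x) = r^{−d} (2π)^{−d/2} exp(−|x/r|²/2)`. -/
noncomputable def gaussKer (d : ℕ) (r : ℝ) (x : EuclideanSpace ℝ (Fin d)) : ℝ :=
  r ^ (-(d : ℝ)) * (2 * Real.pi) ^ (-(d : ℝ) / 2) * Real.exp (-(‖x‖ / r) ^ 2 / 2)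

/-!
By the triangle inequality `|‖x‖ - ‖y‖| ≤ ‖x - y‖`, and since `t / R ≤ 1/4 + t² / (4 r²)` when
`2 r ≤ R`, the product `η_R(x) G_r(x - y)` lies between `e^{-1/4} η_R(y)` and `e^{1/4} η_R(y)`
times Gaussians in `x - y` of widths `√(2/3) r` and `√2 r`. Integrating in `x` gives
`∫ η_R G_r(· - y) ∼ η_R(y)`, and Tonelli turns this into `∫ η_R (f * G_r) ∼ ∫ η_R f`.
-/

open Real Function

section KernelTransfer

variable {α : Type*} [MeasurableSpace α] {μ : Measure α} [SFinite μ]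
  {w f : α → ℝ≥0∞} {k : α → α → ℝ≥0∞}

theorem lintegral_mul_lintegral_mul_comm (hw : Measurable w) (hf : Measurable f)
    (hk : Measurable (uncurry k)) :
    ∫⁻ x, w x * ∫⁻ y, f y * k x y ∂μ ∂μ = ∫⁻ y, f y * ∫⁻ x, w x * k x y ∂μ ∂μ :=
  calc ∫⁻ x, w x * ∫⁻ y, f y * k x y ∂μ ∂μ
      = ∫⁻ x, ∫⁻ y, w x * (f y * k x y) ∂μ ∂μ :=
        lintegral_congr fun x => (lintegral_const_mul _ (hf.mul hk.of_uncurry_left)).symm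
    _ = ∫⁻ y, ∫⁻ x, w x * (f y * k x y) ∂μ ∂μ :=
        lintegral_lintegral_swap
          ((hw.comp measurable_fst).mul ((hf.comp measurable_snd).mul hk)).aemeasurable
    _ = ∫⁻ y, f y * ∫⁻ x, w x * k x y ∂μ ∂μ := lintegral_congr fun y => by
        rw [← lintegral_const_mul (f := fun x => w x * k x y) _ (hw.mul hk.of_uncurry_right)]
        simp only [mul_left_comm]

theorem lintegral_mul_lintegral_le_of_le {C : ℝ≥0∞} (hw : Measurable w) (hf : Measurable f)
    (hk : Measurable (uncurry k)) (h : ∀ y, ∫⁻ x, w x * k x y ∂μ ≤ C * w y) :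
    ∫⁻ x, w x * ∫⁻ y, f y * k x y ∂μ ∂μ ≤ C * ∫⁻ x, w x * f x ∂μ := by
  rw [lintegral_mul_lintegral_mul_comm hw hf hk,
    ← lintegral_const_mul (f := fun x => w x * f x) _ (hw.mul hf)]
  refine lintegral_mono fun y => ?_
  calc f y * ∫⁻ x, w x * k x y ∂μ ≤ f y * (C * w y) := by gcongr; exact h y
    _ = C * (w y * f y) := by ring

theorem le_lintegral_mul_lintegral_of_le {c : ℝ≥0∞} (hw : Measurable w) (hf : Measurable f)
    (hk : Measurable (uncurry k)) (h : ∀ y, c * w y ≤ ∫⁻ x, w x * k x y ∂μ) :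
    c * ∫⁻ x, w x * f x ∂μ ≤ ∫⁻ x, w x * ∫⁻ y, f y * k x y ∂μ ∂μ := by
  rw [lintegral_mul_lintegral_mul_comm hw hf hk,
    ← lintegral_const_mul (f := fun x => w x * f x) _ (hw.mul hf)]
  refine lintegral_mono fun y => ?_
  calc c * (w y * f y) = f y * (c * w y) := by ring
    _ ≤ f y * ∫⁻ x, w x * k x y ∂μ := by gcongr; exact h y

end KernelTransfer

theorem lintegral_exp_neg_sq_norm_div {V : Type*} [NormedAddCommGroup V]
    [InnerProductSpace ℝ V] [FiniteDimensional ℝ V] [MeasurableSpace V] [BorelSpace V]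
    {a : ℝ} (ha : 0 < a) :
    ∫⁻ z : V, ENNReal.ofReal (exp (-(‖z‖ ^ 2 / a))) =
      ENNReal.ofReal ((π * a) ^ (Module.finrank ℝ V / 2 : ℝ)) := by
  have h := GaussianFourier.integral_rexp_neg_mul_sq_norm (V := V) (inv_pos.2 ha)
  simp only [neg_mul, ← div_eq_inv_mul, div_inv_eq_mul] at h
  rw [← ofReal_integral_eq_lintegral_ofReal, h]
  · exact Integrable.of_integral_ne_zero (by rw [h]; positivity)
  · exact Filter.Eventually.of_forall fun _ => (exp_pos _).le

-- AM–GM, after `t / R ≤ t / (2 r)`.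
theorem div_le_inv_four_add_sq_div {r R t : ℝ} (hr : 0 < r) (hrR : r ≤ R / 2) (ht : 0 ≤ t) :
    t / R ≤ 4⁻¹ + t ^ 2 / (4 * r ^ 2) := by
  have h : t / R ≤ t / (2 * r) := div_le_div_of_nonneg_left ht (by linarith) (by linarith)
  have h2 : (t / (2 * r)) ^ 2 = t ^ 2 / (4 * r ^ 2) := by rw [div_pow]; ring
  nlinarith [sq_nonneg (t / (2 * r) - 2⁻¹)]

section Kernels

variable {d : ℕ}

/-- The Gaussian of variance `c r² / 2` with the normalizing factor of `gaussKer d r`, so that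
`gaussProfile d r 2 = gaussKer d r`. -/
noncomputable def gaussProfile (d : ℕ) (r c : ℝ) (z : EuclideanSpace ℝ (Fin d)) : ℝ :=
  r ^ (-(d : ℝ)) * (2 * π) ^ (-(d : ℝ) / 2) * exp (-(‖z‖ ^ 2 / (c * r ^ 2)))

theorem lintegral_gaussProfile {r c : ℝ} (hr : 0 < r) (hc : 0 < c) :
    ∫⁻ z, ENNReal.ofReal (gaussProfile d r c z) = ENNReal.ofReal ((c / 2) ^ ((d : ℝ) / 2)) := by
  have h2π : 0 < 2 * π := by positivity
  simp only [gaussProfile, ENNReal.ofReal_mul (by positivity :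
    (0 : ℝ) ≤ r ^ (-(d : ℝ)) * (2 * π) ^ (-(d : ℝ) / 2))]
  rw [lintegral_const_mul' _ _ ENNReal.ofReal_ne_top,
    lintegral_exp_neg_sq_norm_div (by positivity), finrank_euclideanSpace_fin,
    ← ENNReal.ofReal_mul (by positivity)]
  congr 1
  have hsq : (r ^ 2) ^ ((d : ℝ) / 2) = r ^ (d : ℝ) := by
    rw [← rpow_natCast r 2, ← rpow_mul hr.le]; push_cast; ring_nf
  rw [show π * (c * r ^ 2) = 2 * π * (c / 2) * r ^ 2 by ring,
    mul_rpow (x := 2 * π * (c / 2)) (by positivity) (by positivity),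
    mul_rpow (x := 2 * π) h2π.le (by positivity), hsq, neg_div, rpow_neg hr.le, rpow_neg h2π.le]
  field_simp

theorem expKer_nonneg {R : ℝ} (hR : 0 ≤ R) (x : EuclideanSpace ℝ (Fin d)) : 0 ≤ expKer d R x := by
  unfold expKer; positivity

theorem expKer_mul_gaussKer_le {r R : ℝ} (hr : 0 < r) (hrR : r ≤ R / 2)
    (x y : EuclideanSpace ℝ (Fin d)) :
    expKer d R x * gaussKer d r (x - y) ≤
      exp 4⁻¹ * expKer d R y * gaussProfile d r 4 (x - y) := by
  have hR : 0 < R := by linarith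
  have hamgm := div_le_inv_four_add_sq_div hr hrR (norm_nonneg (x - y))
  have htri : (‖y‖ - ‖x‖) / R ≤ ‖x - y‖ / R := by
    gcongr; simpa [norm_sub_rev x y] using norm_sub_norm_le y x
  simp only [expKer, gaussKer, gaussProfile]
  calc _ = R ^ (-(d : ℝ)) * r ^ (-(d : ℝ)) * (2 * π) ^ (-(d : ℝ) / 2) *
        exp (-‖x‖ / R + -(‖x - y‖ / r) ^ 2 / 2) := by rw [exp_add]; ring
    _ ≤ R ^ (-(d : ℝ)) * r ^ (-(d : ℝ)) * (2 * π) ^ (-(d : ℝ) / 2) *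
        exp (4⁻¹ + -‖y‖ / R + -(‖x - y‖ ^ 2 / (4 * r ^ 2))) := by
      refine mul_le_mul_of_nonneg_left (exp_le_exp.2 ?_) (by positivity)
      have hsq : -(‖x - y‖ / r) ^ 2 / 2 = -(2 * (‖x - y‖ ^ 2 / (4 * r ^ 2))) := by
        field_simp; ring
      linarith [sub_div ‖y‖ ‖x‖ R, neg_div R ‖x‖, neg_div R ‖y‖]
    _ = _ := by rw [exp_add, exp_add]; ring

theorem le_expKer_mul_gaussKer {r R : ℝ} (hr : 0 < r) (hrR : r ≤ R / 2)
    (x y : EuclideanSpace ℝ (Fin d)) :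
    exp (-4⁻¹) * expKer d R y * gaussProfile d r (4 / 3) (x - y) ≤
      expKer d R x * gaussKer d r (x - y) := by
  have hR : 0 < R := by linarith
  have hamgm := div_le_inv_four_add_sq_div hr hrR (norm_nonneg (x - y))
  have htri : (‖x‖ - ‖y‖) / R ≤ ‖x - y‖ / R := by gcongr; exact norm_sub_norm_le x y
  simp only [expKer, gaussKer, gaussProfile]
  calc _ = R ^ (-(d : ℝ)) * r ^ (-(d : ℝ)) * (2 * π) ^ (-(d : ℝ) / 2) *
        exp (-4⁻¹ + -‖y‖ / R + -(‖x - y‖ ^ 2 / (4 / 3 * r ^ 2))) := by rw [exp_add, exp_add]; ring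
    _ ≤ R ^ (-(d : ℝ)) * r ^ (-(d : ℝ)) * (2 * π) ^ (-(d : ℝ) / 2) *
        exp (-‖x‖ / R + -(‖x - y‖ / r) ^ 2 / 2) := by
      refine mul_le_mul_of_nonneg_left (exp_le_exp.2 ?_) (by positivity)
      have hsq : -(‖x - y‖ / r) ^ 2 / 2 = -(2 * (‖x - y‖ ^ 2 / (4 * r ^ 2))) := by
        field_simp; ring
      have hsq' : ‖x - y‖ ^ 2 / (4 / 3 * r ^ 2) = 3 * (‖x - y‖ ^ 2 / (4 * r ^ 2)) := by
        field_simp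
      linarith [sub_div ‖x‖ ‖y‖ R, neg_div R ‖x‖, neg_div R ‖y‖]
    _ = _ := by rw [exp_add]; ring

theorem lintegral_expKer_mul_gaussKer_le {r R : ℝ} (hr : 0 < r) (hrR : r ≤ R / 2)
    (y : EuclideanSpace ℝ (Fin d)) :
    ∫⁻ x, ENNReal.ofReal (expKer d R x) * ENNReal.ofReal (gaussKer d r (x - y)) ≤
      ENNReal.ofReal (exp 4⁻¹ * 2 ^ ((d : ℝ) / 2)) * ENNReal.ofReal (expKer d R y) := by
  have hR : 0 ≤ R := by linarith
  have hy : 0 ≤ exp 4⁻¹ * expKer d R y := mul_nonneg (exp_pos _).le (expKer_nonneg hR y)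
  calc ∫⁻ x, ENNReal.ofReal (expKer d R x) * ENNReal.ofReal (gaussKer d r (x - y))
      ≤ ∫⁻ x, ENNReal.ofReal (exp 4⁻¹ * expKer d R y) *
          ENNReal.ofReal (gaussProfile d r 4 (x - y)) := by
        refine lintegral_mono fun x => ?_
        rw [← ENNReal.ofReal_mul (expKer_nonneg hR x), ← ENNReal.ofReal_mul hy]
        exact ENNReal.ofReal_le_ofReal (expKer_mul_gaussKer_le hr hrR x y)
    _ = ENNReal.ofReal (exp 4⁻¹ * 2 ^ ((d : ℝ) / 2)) * ENNReal.ofReal (expKer d R y) := by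
        rw [lintegral_const_mul' _ _ ENNReal.ofReal_ne_top,
          lintegral_sub_right_eq_self (fun z => ENNReal.ofReal (gaussProfile d r 4 z)),
          lintegral_gaussProfile hr (by norm_num), ← ENNReal.ofReal_mul hy,
          ← ENNReal.ofReal_mul (by positivity)]
        norm_num [mul_right_comm]

theorem le_lintegral_expKer_mul_gaussKer {r R : ℝ} (hr : 0 < r) (hrR : r ≤ R / 2)
    (y : EuclideanSpace ℝ (Fin d)) :
    ENNReal.ofReal (exp (-4⁻¹) * (2 / 3) ^ ((d : ℝ) / 2)) * ENNReal.ofReal (expKer d R y) ≤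
      ∫⁻ x, ENNReal.ofReal (expKer d R x) * ENNReal.ofReal (gaussKer d r (x - y)) := by
  have hR : 0 ≤ R := by linarith
  have hy : 0 ≤ exp (-4⁻¹) * expKer d R y := mul_nonneg (exp_pos _).le (expKer_nonneg hR y)
  calc ENNReal.ofReal (exp (-4⁻¹) * (2 / 3) ^ ((d : ℝ) / 2)) * ENNReal.ofReal (expKer d R y)
      = ∫⁻ x, ENNReal.ofReal (exp (-4⁻¹) * expKer d R y) *
          ENNReal.ofReal (gaussProfile d r (4 / 3) (x - y)) := by
        rw [lintegral_const_mul' _ _ ENNReal.ofReal_ne_top,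
          lintegral_sub_right_eq_self (fun z => ENNReal.ofReal (gaussProfile d r (4 / 3) z)),
          lintegral_gaussProfile hr (by norm_num), ← ENNReal.ofReal_mul hy,
          ← ENNReal.ofReal_mul (by positivity)]
        norm_num [mul_right_comm]
    _ ≤ ∫⁻ x, ENNReal.ofReal (expKer d R x) * ENNReal.ofReal (gaussKer d r (x - y)) := by
        refine lintegral_mono fun x => ?_
        rw [← ENNReal.ofReal_mul (expKer_nonneg hR x), ← ENNReal.ofReal_mul hy]
        exact ENNReal.ofReal_le_ofReal (le_expKer_mul_gaussKer hr hrR x y)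

end Kernels

theorem stmt_6_general (d : ℕ) :
    ∃ C : ℝ≥0∞, 0 < C ∧ C < ⊤ ∧
      ∀ (f : EuclideanSpace ℝ (Fin d) → ℝ≥0∞), Measurable f →
      ∀ r R : ℝ, 0 < r → r ≤ R / 2 →
      (∫⁻ x, ENNReal.ofReal (expKer d R x) *
          ∫⁻ y, f y * ENNReal.ofReal (gaussKer d r (x - y)))
        ≤ C * ∫⁻ x, ENNReal.ofReal (expKer d R x) * f x ∧
      (∫⁻ x, ENNReal.ofReal (expKer d R x) * f x)
        ≤ C * ∫⁻ x, ENNReal.ofReal (expKer d R x) *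
            ∫⁻ y, f y * ENNReal.ofReal (gaussKer d r (x - y)) := by
  set cUp := ENNReal.ofReal (exp 4⁻¹ * 2 ^ ((d : ℝ) / 2))
  set cLow := ENNReal.ofReal (exp (-4⁻¹) * (2 / 3) ^ ((d : ℝ) / 2))
  have hcLow : cLow ≠ 0 := (ENNReal.ofReal_pos.2 (by positivity)).ne'
  refine ⟨max cUp cLow⁻¹, lt_max_of_lt_left (ENNReal.ofReal_pos.2 (by positivity)),
    max_lt ENNReal.ofReal_lt_top (ENNReal.inv_lt_top.2 (pos_iff_ne_zero.2 hcLow)),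
    fun f hf r R hr hrR => ?_⟩
  have hw : Measurable fun x => ENNReal.ofReal (expKer d R x) := by unfold expKer; fun_prop
  have hk : Measurable (uncurry fun x y : EuclideanSpace ℝ (Fin d) =>
      ENNReal.ofReal (gaussKer d r (x - y))) := by unfold gaussKer; fun_prop
  constructor
  · calc _ ≤ cUp * ∫⁻ x, ENNReal.ofReal (expKer d R x) * f x :=
          lintegral_mul_lintegral_le_of_le hw hf hk (lintegral_expKer_mul_gaussKer_le hr hrR)
      _ ≤ _ := by gcongr; exact le_max_left _ _
  · calc _ ≤ cLow⁻¹ * ∫⁻ x, ENNReal.ofReal (expKer d R x) *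
            ∫⁻ y, f y * ENNReal.ofReal (gaussKer d r (x - y)) :=
          (ENNReal.mul_le_iff_le_inv hcLow ENNReal.ofReal_ne_top).1 <|
            le_lintegral_mul_lintegral_of_le hw hf hk (le_lintegral_expKer_mul_gaussKer hr hrR)
      _ ≤ _ := by gcongr; exact le_max_right _ _

/-- For every nonnegative measurable `f` and scales `0 < r ≤ R/2`:
`∫ η_R (f * G_r) ∼ ∫ η_R f`, with constants depending only on `d`. -/
theorem stmt_6 (d : ℕ) (hd : 0 < d) :
    ∃ C : ℝ≥0∞, 0 < C ∧ C < ⊤ ∧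
      ∀ (f : EuclideanSpace ℝ (Fin d) → ℝ≥0∞), Measurable f →
      ∀ r R : ℝ, 0 < r → r ≤ R / 2 →
      (∫⁻ x, ENNReal.ofReal (expKer d R x) *
          ∫⁻ y, f y * ENNReal.ofReal (gaussKer d r (x - y)))
        ≤ C * ∫⁻ x, ENNReal.ofReal (expKer d R x) * f x ∧
      (∫⁻ x, ENNReal.ofReal (expKer d R x) * f x)
        ≤ C * ∫⁻ x, ENNReal.ofReal (expKer d R x) *
            ∫⁻ y, f y * ENNReal.ofReal (gaussKer d r (x - y)) :=
  stmt_6_general d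
end

section
/- Let f : [0,1] → ℝ be m-times continuously differentiable, let α ≥ 0 and m ∈ ℕ with α + 1 < m. Then sup_{t∈[0,1]} |f(t)| ≤ C ∑_{k=0}^{m} ∫_0^1 t^α |f^{(k)}(t)| dt for a constant C depending only on m and α. -/
/-! Write `g_k` for the `k`-th derivative of `f`. The fundamental theorem of calculus gives
`|f t| ≤ |f 1| + ∫_0^1 |g_1|`, and the Hardy-type step
`∫_0^1 s^j |g| ≤ |g 1| + ∫_0^1 s^(j+1) |g'|` (integrate `|g s - g 1| ≤ ∫_s^1 |g'|` against `s^j`,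
then integrate by parts) raises the power of the weight by one at the cost of a boundary value.
Iterating up to `g_m` yields `|f t| ≤ ∑_{k<m} |g_k 1| + ∫_0^1 s^(m-1) |g_m|`. As `α ≤ m - 1`, the
last integral is dominated by the `s^α`-weighted one, and each `|g_k 1|` is controlled by
averaging over `[1/2, 1]`, where `s^α ≥ 2^(-α)`. -/

open intervalIntegral Set
open MeasureTheory (volume ae_of_all ae_restrict_mem)

section
variable {h : ℝ → ℝ} {α : ℝ}

theorem rpow_mul_integral_abs_le (hh : Continuous h) (hα : 0 ≤ α) {a : ℝ} (ha : 0 ≤ a)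
    (ha1 : a ≤ 1) : a ^ α * ∫ s in a..1, |h s| ≤ ∫ s in (0 : ℝ)..1, s ^ α * |h s| := by
  have hw : Continuous fun s : ℝ => s ^ α * |h s| := (Real.continuous_rpow_const hα).mul hh.abs
  rw [← intervalIntegral.integral_const_mul]
  calc ∫ s in a..1, a ^ α * |h s| ≤ ∫ s in a..1, s ^ α * |h s| :=
        integral_mono_on ha1 ((continuous_const.mul hh.abs).intervalIntegrable _ _)
          (hw.intervalIntegrable _ _)
          fun s hs => mul_le_mul_of_nonneg_right (Real.rpow_le_rpow ha hs.1 hα) (abs_nonneg _)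
    _ ≤ ∫ s in (0 : ℝ)..1, s ^ α * |h s| :=
        integral_mono_interval ha ha1 le_rfl
          ((ae_restrict_mem measurableSet_Ioc).mono fun s hs =>
            mul_nonneg (Real.rpow_nonneg hs.1.le α) (abs_nonneg _))
          (hw.intervalIntegrable 0 1)

theorem integral_pow_mul_abs_le_integral_rpow_mul_abs (hh : Continuous h) (hα : 0 ≤ α) {n : ℕ}
    (hn : α ≤ n) : ∫ s in (0 : ℝ)..1, s ^ n * |h s| ≤ ∫ s in (0 : ℝ)..1, s ^ α * |h s| := by
  refine integral_mono_on zero_le_one (((continuous_pow n).mul hh.abs).intervalIntegrable _ _)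
    (((Real.continuous_rpow_const hα).mul hh.abs).intervalIntegrable _ _) fun s hs => ?_
  rw [← Real.rpow_natCast]
  exact mul_le_mul_of_nonneg_right (Real.rpow_le_rpow_of_exponent_ge' hs.1 hs.2 hα hn)
    (abs_nonneg _)

end

section
variable {g g' : ℝ → ℝ}

theorem abs_sub_le_integral_abs_deriv (hg : ∀ x, HasDerivAt g (g' x) x) (hg' : Continuous g')
    {a b : ℝ} (hab : a ≤ b) : |g b - g a| ≤ ∫ u in a..b, |g' u| := by
  rw [← integral_eq_sub_of_hasDerivAt (fun x _ => hg x) (hg'.intervalIntegrable a b)]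
  exact abs_integral_le_integral_abs hab

theorem mul_abs_le_integral_abs_add_mul_integral_abs_deriv (hg : ∀ x, HasDerivAt g (g' x) x)
    (hg' : Continuous g') {a b : ℝ} (hab : a ≤ b) :
    (b - a) * |g b| ≤ (∫ s in a..b, |g s|) + (b - a) * ∫ u in a..b, |g' u| := by
  have hgc : Continuous g := continuous_iff_continuousAt.2 fun x => (hg x).continuousAt
  have hpointwise : ∀ s ∈ Icc a b, |g b| ≤ |g s| + ∫ u in a..b, |g' u| := by
    intro s hs
    have hsub := abs_sub_le_integral_abs_deriv hg hg' hs.2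
    have hmono : ∫ u in s..b, |g' u| ≤ ∫ u in a..b, |g' u| :=
      integral_mono_interval hs.1 hs.2 le_rfl (ae_of_all _ fun _ => abs_nonneg _)
        (hg'.abs.intervalIntegrable a b)
    linarith [abs_sub_abs_le_abs_sub (g b) (g s)]
  have := integral_mono_on hab (intervalIntegrable_const (μ := volume))
    ((hgc.abs.add continuous_const).intervalIntegrable a b) hpointwise
  simp only [Pi.add_apply] at this
  rwa [integral_const, integral_add (hgc.abs.intervalIntegrable a b) intervalIntegrable_const,
    integral_const, smul_eq_mul, smul_eq_mul] at this

theorem abs_apply_one_le_two_rpow_mul (hg : ∀ x, HasDerivAt g (g' x) x) (hg' : Continuous g')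
    {α : ℝ} (hα : 0 ≤ α) :
    |g 1| ≤ 2 ^ (α + 1) *
      ((∫ s in (0 : ℝ)..1, s ^ α * |g s|) + ∫ s in (0 : ℝ)..1, s ^ α * |g' s|) := by
  have hgc : Continuous g := continuous_iff_continuousAt.2 fun x => (hg x).continuousAt
  have havg := mul_abs_le_integral_abs_add_mul_integral_abs_deriv hg hg' (a := 1 / 2) (b := 1)
    (by norm_num)
  have hderiv_nonneg : 0 ≤ ∫ u in (1 / 2 : ℝ)..1, |g' u| :=
    integral_nonneg (by norm_num) fun _ _ => abs_nonneg _
  have hconst : (2 : ℝ) ^ (α + 1) * (1 / 2) ^ α = 2 := by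
    rw [Real.rpow_add_one two_ne_zero, mul_right_comm, ← Real.mul_rpow] <;> norm_num
  calc |g 1| ≤ 2 ^ (α + 1) * ((1 / 2) ^ α * (∫ s in (1 / 2 : ℝ)..1, |g s|) +
        (1 / 2) ^ α * ∫ u in (1 / 2 : ℝ)..1, |g' u|) := by
        rw [← mul_add, ← mul_assoc, hconst]; linarith
    _ ≤ _ := by
        gcongr
        · exact rpow_mul_integral_abs_le hgc hα (by norm_num) (by norm_num)
        · exact rpow_mul_integral_abs_le hg' hα (by norm_num) (by norm_num)

theorem integral_pow_mul_abs_le_abs_apply_one_add (hg : ∀ x, HasDerivAt g (g' x) x)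
    (hg' : Continuous g') (n : ℕ) :
    ∫ s in (0 : ℝ)..1, s ^ n * |g s| ≤ |g 1| + ∫ s in (0 : ℝ)..1, s ^ (n + 1) * |g' s| := by
  have hgc : Continuous g := continuous_iff_continuousAt.2 fun x => (hg x).continuousAt
  set v : ℝ → ℝ := fun s => ∫ u in s..1, |g' u|
  have hv : ∀ s, HasDerivAt v (-|g' s|) s := fun s =>
    integral_hasDerivAt_left (hg'.abs.intervalIntegrable _ _)
      (hg'.abs.stronglyMeasurableAtFilter _ _) hg'.abs.continuousAt
  have hvc : Continuous v := continuous_iff_continuousAt.2 fun s => (hv s).continuousAt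
  -- integrate by parts against `s ^ (n + 1)`; both boundary terms vanish since `v 1 = 0`
  have hparts : (n + 1 : ℝ) * ∫ s in (0 : ℝ)..1, s ^ n * v s =
      ∫ s in (0 : ℝ)..1, s ^ (n + 1) * |g' s| := by
    have := integral_mul_deriv_eq_deriv_mul (a := 0) (b := 1) (u := fun s => s ^ (n + 1))
      (u' := fun s => (n + 1 : ℝ) * s ^ n) (fun x _ => by simpa using hasDerivAt_pow (n + 1) x)
      (fun x _ => hv x) ((continuous_const.mul (continuous_pow n)).intervalIntegrable _ _)
      (hg'.abs.neg.intervalIntegrable _ _)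
    simp [v, integral_neg, intervalIntegral.integral_const_mul, mul_assoc] at this
    linarith
  have hpointwise : ∀ s ∈ Icc (0 : ℝ) 1, s ^ n * |g s| ≤ s ^ n * |g 1| + s ^ n * v s := by
    intro s hs
    rw [← mul_add]
    refine mul_le_mul_of_nonneg_left ?_ (pow_nonneg hs.1 n)
    linarith [abs_sub_le_integral_abs_deriv hg hg' hs.2, abs_sub_abs_le_abs_sub (g s) (g 1),
      abs_sub_comm (g s) (g 1)]
  have hv_nonneg : 0 ≤ ∫ s in (0 : ℝ)..1, s ^ (n + 1) * |g' s| :=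
    integral_nonneg zero_le_one fun s hs => mul_nonneg (pow_nonneg hs.1 _) (abs_nonneg _)
  have hn : (1 : ℝ) ≤ n + 1 := by linarith [n.cast_nonneg (α := ℝ)]
  calc ∫ s in (0 : ℝ)..1, s ^ n * |g s|
      ≤ ∫ s in (0 : ℝ)..1, (s ^ n * |g 1| + s ^ n * v s) :=
        integral_mono_on zero_le_one (((continuous_pow n).mul hgc.abs).intervalIntegrable _ _)
          ((((continuous_pow n).mul continuous_const).add
            ((continuous_pow n).mul hvc)).intervalIntegrable _ _) hpointwise
    _ = |g 1| / (n + 1) + ∫ s in (0 : ℝ)..1, s ^ n * v s := by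
        rw [integral_add
          ((by fun_prop : Continuous fun s : ℝ => s ^ n * |g 1|).intervalIntegrable _ _)
          ((by fun_prop : Continuous fun s => s ^ n * v s).intervalIntegrable _ _),
          integral_mul_const, integral_pow]
        norm_num
        ring
    _ ≤ |g 1| + ∫ s in (0 : ℝ)..1, s ^ (n + 1) * |g' s| := by
        gcongr
        · exact div_le_self (abs_nonneg _) hn
        · nlinarith [hparts]

end

section
variable {f : ℝ → ℝ} {m : ℕ}

theorem ContDiff.hasDerivAt_iteratedDeriv (hf : ContDiff ℝ m f) {k : ℕ} (hk : k < m) (x : ℝ) :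
    HasDerivAt (iteratedDeriv k f) (iteratedDeriv (k + 1) f x) x := by
  rw [iteratedDeriv_succ]
  exact (hf.differentiable_iteratedDeriv k (by exact_mod_cast hk) x).hasDerivAt

theorem integral_pow_mul_abs_iteratedDeriv_le (hf : ContDiff ℝ m f) (n j k : ℕ)
    (hkn : k + n ≤ m) :
    ∫ s in (0 : ℝ)..1, s ^ j * |iteratedDeriv k f s| ≤
      ∑ i ∈ Finset.range n, |iteratedDeriv (i + k) f 1| +
        ∫ s in (0 : ℝ)..1, s ^ (j + n) * |iteratedDeriv (k + n) f s| := by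
  induction n generalizing j k with
  | zero => simp
  | succ n ih =>
    have hstep := integral_pow_mul_abs_le_abs_apply_one_add (hf.hasDerivAt_iteratedDeriv (by omega))
      (hf.continuous_iteratedDeriv (k + 1) (by exact_mod_cast (by omega : k + 1 ≤ m))) j
    have hrest := ih (j + 1) (k + 1) (by omega)
    rw [Finset.sum_range_succ']
    simp only [← add_assoc, add_right_comm _ 1 k, add_right_comm j 1 n, add_right_comm k 1 n,
      zero_add] at hrest ⊢
    linarith

theorem abs_le_sum_abs_iteratedDeriv_one_add {n : ℕ} (hf : ContDiff ℝ (n + 1 : ℕ) f) {t : ℝ}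
    (ht : t ∈ Icc (0 : ℝ) 1) :
    |f t| ≤ ∑ i ∈ Finset.range (n + 1), |iteratedDeriv i f 1| +
      ∫ s in (0 : ℝ)..1, s ^ n * |iteratedDeriv (n + 1) f s| := by
  have hderiv := hf.hasDerivAt_iteratedDeriv (k := 0) n.succ_pos
  have hderiv' := hf.continuous_iteratedDeriv 1 (by exact_mod_cast n.succ_pos)
  have hftc := abs_sub_le_integral_abs_deriv hderiv hderiv' ht.2
  have hmono : ∫ u in t..1, |iteratedDeriv 1 f u| ≤
      ∫ s in (0 : ℝ)..1, s ^ 0 * |iteratedDeriv 1 f s| := by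
    simp only [pow_zero, one_mul]
    exact integral_mono_interval ht.1 ht.2 le_rfl (ae_of_all _ fun _ => abs_nonneg _)
      (hderiv'.abs.intervalIntegrable 0 1)
  have hchain := integral_pow_mul_abs_iteratedDeriv_le hf n 0 1 (by omega)
  rw [Finset.sum_range_succ']
  simp only [iteratedDeriv_zero, zero_add, add_comm 1 n] at hftc hchain ⊢
  linarith [abs_sub_abs_le_abs_sub (f t) (f 1), abs_sub_comm (f t) (f 1)]

end

/-- Weighted Sobolev estimate in one variable: for `α + 1 < m`,
`sup_{[0,1]} |f| ≤ C ∑_{k=0}^{m} ∫_0^1 t^α |f^{(k)}(t)| dt` for all `C^m` functions `f`. -/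
theorem stmt_8 (m : ℕ) (α : ℝ) (hα : 0 ≤ α) (h : α + 1 < m) :
    ∃ C : ℝ, 0 < C ∧ ∀ f : ℝ → ℝ, ContDiff ℝ m f →
      ∀ t ∈ Set.Icc (0 : ℝ) 1, |f t| ≤
        C * ∑ k ∈ Finset.range (m + 1), ∫ s in (0 : ℝ)..1, s ^ α * |iteratedDeriv k f s| := by
  obtain ⟨n, rfl⟩ : ∃ n, m = n + 1 :=
    Nat.exists_eq_add_one.2 (by exact_mod_cast (by linarith : (0 : ℝ) < m))
  refine ⟨2 * 2 ^ (α + 1) + 1, by positivity, fun f hf t ht => ?_⟩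
  set W : ℕ → ℝ := fun k => ∫ s in (0 : ℝ)..1, s ^ α * |iteratedDeriv k f s|
  have hW : ∀ k, 0 ≤ W k := fun k =>
    integral_nonneg zero_le_one fun s hs => mul_nonneg (Real.rpow_nonneg hs.1 α) (abs_nonneg _)
  have hboundary : ∀ i ∈ Finset.range (n + 1),
      |iteratedDeriv i f 1| ≤ 2 ^ (α + 1) * (W i + W (i + 1)) :=
    fun i hi => abs_apply_one_le_two_rpow_mul
      (hf.hasDerivAt_iteratedDeriv (Finset.mem_range.1 hi))
      (hf.continuous_iteratedDeriv _ (by exact_mod_cast Finset.mem_range.1 hi)) hα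
  have htop : ∫ s in (0 : ℝ)..1, s ^ n * |iteratedDeriv (n + 1) f s| ≤ W (n + 1) :=
    integral_pow_mul_abs_le_integral_rpow_mul_abs (hf.continuous_iteratedDeriv _ le_rfl) hα
      (by push_cast at h; linarith)
  set S := ∑ k ∈ Finset.range (n + 1 + 1), W k
  have hS : S = ∑ i ∈ Finset.range (n + 1), W i + W (n + 1) := Finset.sum_range_succ W (n + 1)
  have hS' : S = ∑ i ∈ Finset.range (n + 1), W (i + 1) + W 0 := Finset.sum_range_succ' W (n + 1)
  have hsum_nonneg : 0 ≤ ∑ i ∈ Finset.range (n + 1), W i := Finset.sum_nonneg fun i _ => hW i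
  calc |f t| ≤ ∑ i ∈ Finset.range (n + 1), |iteratedDeriv i f 1| +
        ∫ s in (0 : ℝ)..1, s ^ n * |iteratedDeriv (n + 1) f s| :=
        abs_le_sum_abs_iteratedDeriv_one_add hf ht
    _ ≤ 2 ^ (α + 1) *
          (∑ i ∈ Finset.range (n + 1), W i + ∑ i ∈ Finset.range (n + 1), W (i + 1)) +
        W (n + 1) := by
        rw [← Finset.sum_add_distrib, Finset.mul_sum]
        gcongr with i hi
        exact hboundary i hi
    _ ≤ 2 ^ (α + 1) * (S + S) + S := by
        gcongr <;> linarith [hW 0, hW (n + 1)]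
    _ = (2 * 2 ^ (α + 1) + 1) * S := by ring
end

section
/- Let E₁, E₀, E₋₁ : [0,1] → [0,∞) be functions, θ ∈ (0,1), α = (1−θ)/θ, and C > 0, satisfying: (i) E₀(1) + ∫₀¹ t^{1+α} E₁(t) dt ≤ C ∫₀¹ t^α E₀(t) dt; (ii) E₁(1) ≤ C ∫₀¹ t^{1+α} E₁(t) dt; and (iii) E₀(t) ≤ C(E₁(t)^{1−θ} E₋₁(t)^θ + E₋₁(t)) for all t. Then E₀(1) + E₁(1) ≤ C' ∫₀¹ E₋₁(t) dt, where C' depends only on C and θ. -/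
open MeasureTheory

/-!
Write `α = (1 - θ) / θ`. Since `(1 + α)(1 - θ) = α`, hypothesis (iii) gives pointwise
`t^α E₀ ≤ C ((t^{1+α} E₁)^{1-θ} E₋₁^θ + E₋₁)`, and Young's inequality with a small parameter `ε`
bounds the product by `ε (t^{1+α} E₁) + K_ε E₋₁`. Integrating, `∫ t^α E₀` is at most a small
multiple of `∫ t^{1+α} E₁` plus a multiple of `∫ E₋₁`; by (i) the first term is absorbed into the
left side of (i), which then controls `E₀(1)` and `∫ t^{1+α} E₁`, and (ii) controls `E₁(1)`.
-/

namespace Real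

theorem rpow_one_sub_mul_rpow_le_eps_mul_add {θ ε a b : ℝ} (hθ0 : 0 < θ) (hθ1 : θ < 1)
    (hε : 0 < ε) (ha : 0 ≤ a) (hb : 0 ≤ b) :
    a ^ (1 - θ) * b ^ θ ≤ (1 - θ) * ε * a + θ * ε ^ (-(1 - θ) / θ) * b := by
  have hεpow : ε ^ (1 - θ) * (ε ^ (-(1 - θ) / θ)) ^ θ = 1 := by
    rw [← rpow_mul hε.le, div_mul_cancel₀ _ hθ0.ne', ← rpow_add hε, add_neg_cancel, rpow_zero]
  calc a ^ (1 - θ) * b ^ θ = (ε * a) ^ (1 - θ) * (ε ^ (-(1 - θ) / θ) * b) ^ θ := by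
        rw [mul_rpow hε.le ha, mul_rpow (rpow_nonneg hε.le _) hb]
        linear_combination (a ^ (1 - θ) * b ^ θ) * hεpow.symm
    _ ≤ (1 - θ) * (ε * a) + θ * (ε ^ (-(1 - θ) / θ) * b) :=
        geom_mean_le_arith_mean2_weighted (by linarith) hθ0.le (by positivity) (by positivity)
          (by ring)
    _ = (1 - θ) * ε * a + θ * ε ^ (-(1 - θ) / θ) * b := by ring

theorem rpow_mul_rpow_one_sub {θ t x : ℝ} (hθ0 : 0 < θ) (ht : 0 ≤ t) (hx : 0 ≤ x) :
    t ^ ((1 - θ) / θ) * x ^ (1 - θ) = (t ^ (1 + (1 - θ) / θ) * x) ^ (1 - θ) := by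
  rw [mul_rpow (rpow_nonneg ht _) hx, ← rpow_mul ht]
  congr 2
  field_simp
  ring

end Real

section Interpolation

variable {C θ ε : ℝ}

theorem weighted_le_of_le_interp (hC : 0 ≤ C) (hθ0 : 0 < θ) (hθ1 : θ < 1) (hε : 0 < ε)
    {t x y e : ℝ} (ht : t ∈ Set.Icc (0 : ℝ) 1) (hx : 0 ≤ x) (hy : 0 ≤ y)
    (he : e ≤ C * (x ^ (1 - θ) * y ^ θ + y)) :
    t ^ ((1 - θ) / θ) * e ≤
      C * ((1 - θ) * ε * (t ^ (1 + (1 - θ) / θ) * x) + (θ * ε ^ (-(1 - θ) / θ) + 1) * y) := by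
  have htα : 0 ≤ t ^ ((1 - θ) / θ) := Real.rpow_nonneg ht.1 _
  have htα_le : t ^ ((1 - θ) / θ) ≤ 1 :=
    Real.rpow_le_one ht.1 ht.2 (div_nonneg (by linarith) hθ0.le)
  have hyoung := Real.rpow_one_sub_mul_rpow_le_eps_mul_add hθ0 hθ1 hε
    (mul_nonneg (Real.rpow_nonneg ht.1 (1 + (1 - θ) / θ)) hx) hy
  rw [← Real.rpow_mul_rpow_one_sub hθ0 ht.1 hx] at hyoung
  calc t ^ ((1 - θ) / θ) * e
      ≤ C * (t ^ ((1 - θ) / θ) * x ^ (1 - θ) * y ^ θ + t ^ ((1 - θ) / θ) * y) := by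
        linarith [mul_le_mul_of_nonneg_left he htα]
    _ ≤ C * ((1 - θ) * ε * (t ^ (1 + (1 - θ) / θ) * x) + θ * ε ^ (-(1 - θ) / θ) * y + y) :=
        mul_le_mul_of_nonneg_left (add_le_add hyoung (mul_le_of_le_one_left hy htα_le)) hC
    _ = _ := by ring

theorem integral_weighted_le_of_le_interp (hC : 0 ≤ C) (hθ0 : 0 < θ) (hθ1 : θ < 1) (hε : 0 < ε)
    {E₁ E₀ Em : ℝ → ℝ} (hE₁ : ∀ t ∈ Set.Icc (0 : ℝ) 1, 0 ≤ E₁ t)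
    (hEm : ∀ t ∈ Set.Icc (0 : ℝ) 1, 0 ≤ Em t)
    (hI₀ : IntervalIntegrable (fun t => t ^ ((1 - θ) / θ) * E₀ t) volume 0 1)
    (hI₁ : IntervalIntegrable (fun t => t ^ (1 + (1 - θ) / θ) * E₁ t) volume 0 1)
    (hIm : IntervalIntegrable Em volume 0 1)
    (hinterp : ∀ t ∈ Set.Icc (0 : ℝ) 1, E₀ t ≤ C * (E₁ t ^ (1 - θ) * Em t ^ θ + Em t)) :
    ∫ t in (0 : ℝ)..1, t ^ ((1 - θ) / θ) * E₀ t ≤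
      C * ((1 - θ) * ε * ∫ t in (0 : ℝ)..1, t ^ (1 + (1 - θ) / θ) * E₁ t) +
        C * (θ * ε ^ (-(1 - θ) / θ) + 1) * ∫ t in (0 : ℝ)..1, Em t := by
  have hbound := intervalIntegral.integral_mono_on zero_le_one hI₀
    (((hI₁.const_mul ((1 - θ) * ε)).add (hIm.const_mul (θ * ε ^ (-(1 - θ) / θ) + 1))).const_mul C)
    fun t ht => weighted_le_of_le_interp hC hθ0 hθ1 hε ht (hE₁ t ht) (hEm t ht) (hinterp t ht)
  rw [intervalIntegral.integral_const_mul, intervalIntegral.integral_add (hI₁.const_mul _)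
    (hIm.const_mul _), intervalIntegral.integral_const_mul,
    intervalIntegral.integral_const_mul] at hbound
  linarith

end Interpolation

theorem add_le_of_absorb {C e₀ e₁ A B L : ℝ} (hC : 0 < C) (he₀ : 0 ≤ e₀) (hB : 0 ≤ B)
    (hi : e₀ + B ≤ C * A) (hii : e₁ ≤ C * B) (hA : A ≤ B / (2 * C) + L) :
    e₀ + e₁ ≤ (C + 2 * C ^ 2) * L := by
  have hCA : C * A ≤ B / 2 + C * L := by
    calc C * A ≤ C * (B / (2 * C) + L) := mul_le_mul_of_nonneg_left hA hC.le
      _ = B / 2 + C * L := by field_simp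
  nlinarith

/-- Abstract ODE/interpolation argument: if
(i) `E₀(1) + ∫₀¹ t^{1+α} E₁ ≤ C ∫₀¹ t^α E₀`, (ii) `E₁(1) ≤ C ∫₀¹ t^{1+α} E₁`, and
(iii) `E₀ ≤ C (E₁^{1−θ} E₋₁^θ + E₋₁)` pointwise on `[0,1]`, with `α = (1−θ)/θ`,
then `E₀(1) + E₁(1) ≤ C' ∫₀¹ E₋₁`, with `C'` depending only on `C` and `θ`. -/
theorem stmt_9 (C θ : ℝ) (hC : 0 < C) (hθ0 : 0 < θ) (hθ1 : θ < 1) :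
    ∃ C' : ℝ, 0 < C' ∧
      ∀ E₁ E₀ Em : ℝ → ℝ,
        (∀ t ∈ Set.Icc (0 : ℝ) 1, 0 ≤ E₁ t ∧ 0 ≤ E₀ t ∧ 0 ≤ Em t) →
        IntervalIntegrable (fun t => t ^ ((1 - θ) / θ) * E₀ t) volume 0 1 →
        IntervalIntegrable (fun t => t ^ (1 + (1 - θ) / θ) * E₁ t) volume 0 1 →
        IntervalIntegrable Em volume 0 1 →
        (E₀ 1 + ∫ t in (0 : ℝ)..1, t ^ (1 + (1 - θ) / θ) * E₁ t ≤
          C * ∫ t in (0 : ℝ)..1, t ^ ((1 - θ) / θ) * E₀ t) →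
        (E₁ 1 ≤ C * ∫ t in (0 : ℝ)..1, t ^ (1 + (1 - θ) / θ) * E₁ t) →
        (∀ t ∈ Set.Icc (0 : ℝ) 1, E₀ t ≤ C * (E₁ t ^ (1 - θ) * Em t ^ θ + Em t)) →
        E₀ 1 + E₁ 1 ≤ C' * ∫ t in (0 : ℝ)..1, Em t := by
  -- `ε` is chosen so that `C (1 - θ) ε = 1 / (2 C)`, which makes the absorption possible.
  set ε : ℝ := 1 / (2 * C ^ 2 * (1 - θ))
  have hθ : 0 < 1 - θ := by linarith
  have hε : 0 < ε := by positivity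
  set K : ℝ := C * (θ * ε ^ (-(1 - θ) / θ) + 1)
  have hK : 0 < K := by have := Real.rpow_pos_of_pos hε (-(1 - θ) / θ); positivity
  refine ⟨(C + 2 * C ^ 2) * K, by positivity, ?_⟩
  intro E₁ E₀ Em hnonneg hI₀ hI₁ hIm hi hii hinterp
  have hA := integral_weighted_le_of_le_interp hC.le hθ0 hθ1 hε (fun t ht => (hnonneg t ht).1)
    (fun t ht => (hnonneg t ht).2.2) hI₀ hI₁ hIm hinterp
  have hCε : C * ((1 - θ) * ε) = 1 / (2 * C) := by
    simp only [ε]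
    field_simp [hθ.ne']
  rw [← mul_assoc, hCε, one_div_mul_eq_div] at hA
  have hB : 0 ≤ ∫ t in (0 : ℝ)..1, t ^ (1 + (1 - θ) / θ) * E₁ t :=
    intervalIntegral.integral_nonneg zero_le_one fun t ht =>
      mul_nonneg (Real.rpow_nonneg ht.1 _) (hnonneg t ht).1
  rw [mul_assoc]
  exact add_le_of_absorb hC (hnonneg 1 ⟨zero_le_one, le_rfl⟩).2.1 hB hi hii hA
end

section
/- Let κ ∈ ℕ and define g₁(μ,T) = (T^{−1} + μ)^{−1} for μ, T > 0, and recursively g_{κ+1}(μ,T) = (2^κ g_κ(μ,2T) − g_κ(μ,T))/(2^κ − 1). Then for every κ ≥ 1 there is a constant c_κ > 0 such that for all μ, T > 0, |g_κ(μ,T) − 1/μ| ≥ c_κ T^{−κ} / (μ (T^{−1} + μ)^κ). -/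
/-- The `κ`-th Richardson extrapolation (in `T`) of the resolvent function
`g₁(μ,T) = (T⁻¹ + μ)⁻¹`, via `g_{κ+1}(μ,T) = (2^κ g_κ(μ,2T) − g_κ(μ,T))/(2^κ − 1)`.
(The value at `κ = 0` is set to `g₀(μ) = μ⁻¹` and is not used by the recursion.) -/
noncomputable def gRich : ℕ → ℝ → ℝ → ℝ
  | 0, mu, _ => mu⁻¹
  | 1, mu, T => (T⁻¹ + mu)⁻¹
  | (n + 2), mu, T =>
      (2 ^ (n + 1) * gRich (n + 1) mu (2 * T) - gRich (n + 1) mu T) / (2 ^ (n + 1) - 1)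

/-!
Writing `x_j = (2^j T)⁻¹` for the step sizes of the extrapolation, the error has the closed form
`1/μ − g_κ(μ,T) = μ⁻¹ ∏_{j<κ} x_j/(x_j + μ)`.
The induction step rests on `x_0 = 2^κ x_κ`, which makes one Richardson step turn
`2^κ r(x_κ) − r(x_0)` into `(2^κ − 1) r(x_κ) r(x_0)` for `r(x) = x/(x + μ)`.
Bounding each denominator `x_j + μ` by `x_0 + μ` gives the claimed lower bound with
`c_κ = (∏_{j<κ} 2^j)⁻¹`.
-/

open Finset

lemma gRich_succ {n : ℕ} (hn : n ≠ 0) (mu T : ℝ) :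
    gRich (n + 1) mu T = (2 ^ n * gRich n mu (2 * T) - gRich n mu T) / (2 ^ n - 1) := by
  obtain ⟨m, rfl⟩ := Nat.exists_eq_succ_of_ne_zero hn
  rfl

noncomputable def richardsonRatio (mu T : ℝ) (j : ℕ) : ℝ :=
  (2 ^ j * T)⁻¹ / ((2 ^ j * T)⁻¹ + mu)

noncomputable def richardsonError (κ : ℕ) (mu T : ℝ) : ℝ :=
  mu⁻¹ * ∏ j ∈ range κ, richardsonRatio mu T j

lemma richardsonRatio_two_mul (mu T : ℝ) (j : ℕ) :
    richardsonRatio mu (2 * T) j = richardsonRatio mu T (j + 1) := by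
  simp only [richardsonRatio, pow_succ, mul_assoc]

lemma two_pow_mul_richardsonRatio_sub {mu T : ℝ} (hmu : 0 ≤ mu) (hT : 0 < T) (n : ℕ) :
    2 ^ n * richardsonRatio mu T n - richardsonRatio mu T 0
      = (2 ^ n - 1) * richardsonRatio mu T n * richardsonRatio mu T 0 := by
  simp only [richardsonRatio]
  field_simp
  ring

theorem inv_sub_gRich {κ : ℕ} (hκ : 1 ≤ κ) {mu : ℝ} (hmu : 0 < mu) :
    ∀ {T : ℝ}, 0 < T → mu⁻¹ - gRich κ mu T = richardsonError κ mu T := by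
  induction κ, hκ using Nat.le_induction with
  | base =>
    intro T hT
    simp only [gRich, richardsonError, richardsonRatio, prod_range_one, pow_zero, one_mul]
    field_simp
    ring
  | succ n hn ih =>
    intro T hT
    obtain ⟨m, rfl⟩ := Nat.exists_eq_add_of_le' hn
    have hg : ∀ {T : ℝ}, 0 < T → gRich (m + 1) mu T = mu⁻¹ - richardsonError (m + 1) mu T :=
      fun hT ↦ by rw [← ih hT, sub_sub_cancel]
    have hstep := two_pow_mul_richardsonRatio_sub hmu.le hT (m + 1)
    set ρ := richardsonRatio mu T
    set P := ∏ j ∈ range m, ρ (j + 1)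
    have herr : richardsonError (m + 1) mu T = mu⁻¹ * (P * ρ 0) := by
      rw [richardsonError, prod_range_succ']
    have herr_two_mul : richardsonError (m + 1) mu (2 * T) = mu⁻¹ * (P * ρ (m + 1)) := by
      simp only [richardsonError, richardsonRatio_two_mul, prod_range_succ, P, ρ]
    have herr_succ : richardsonError (m + 1 + 1) mu T = mu⁻¹ * (P * ρ (m + 1) * ρ 0) := by
      rw [richardsonError, prod_range_succ', prod_range_succ]
    have h2pow : (2 : ℝ) ^ (m + 1) - 1 ≠ 0 := (sub_pos.2 (one_lt_pow₀ one_lt_two m.succ_ne_zero)).ne'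
    rw [gRich_succ m.add_one_ne_zero, hg hT, hg (by positivity), herr, herr_two_mul, herr_succ]
    clear_value ρ P
    field_simp
    linear_combination P * hstep

lemma le_richardsonError (κ : ℕ) {mu T : ℝ} (hmu : 0 ≤ mu) (hT : 0 < T) :
    (∏ j ∈ range κ, (2 : ℝ) ^ j)⁻¹ * T⁻¹ ^ κ / (mu * (T⁻¹ + mu) ^ κ) ≤ richardsonError κ mu T := by
  calc (∏ j ∈ range κ, (2 : ℝ) ^ j)⁻¹ * T⁻¹ ^ κ / (mu * (T⁻¹ + mu) ^ κ)
      = mu⁻¹ * ∏ j ∈ range κ, (2 ^ j * T)⁻¹ / (T⁻¹ + mu) := by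
        simp only [prod_div_distrib, mul_inv, prod_mul_distrib, prod_inv_distrib, prod_const,
          card_range]
        ring
    _ ≤ richardsonError κ mu T := by
        unfold richardsonError richardsonRatio
        gcongr with j
        exact le_mul_of_one_le_left hT.le (one_le_pow₀ one_le_two)

/-- Lower bound on the Richardson extrapolation error: for every `κ ≥ 1` there is `c_κ > 0`
with `|g_κ(μ,T) − 1/μ| ≥ c_κ T^{−κ}/(μ (T^{−1}+μ)^κ)` for all `μ, T > 0`. -/
theorem stmt_10 : ∀ κ : ℕ, 1 ≤ κ → ∃ c : ℝ, 0 < c ∧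
    ∀ mu T : ℝ, 0 < mu → 0 < T →
      c * T ^ (-(κ : ℝ)) / (mu * (T⁻¹ + mu) ^ κ) ≤ |gRich κ mu T - mu⁻¹| := by
  intro κ hκ
  refine ⟨(∏ j ∈ range κ, (2 : ℝ) ^ j)⁻¹, by positivity, fun mu T hmu hT ↦ ?_⟩
  rw [Real.rpow_neg hT.le, Real.rpow_natCast, ← inv_pow, abs_sub_comm, inv_sub_gRich hκ hmu hT]
  exact (le_richardsonError κ hmu.le hT).trans (le_abs_self _)
end

section
/- Let C₀ ≥ 1, p ≥ 1, and θ ∈ (0,1) with C₀θ^p < 1. Suppose (ω_n)_{n≥0} are integrable functions on ℝ^d and (ψ_{r_n}) are kernels with r_n = θ^n such that ω_{n+1} = ω_n − ψ_{r_{n+1}} * ω_n, ∫|∇^p ω_n| ≤ C₀^n M, and ∫|ω_{n+1}| ≤ C₀ r_{n+1}^p ∫|∇^p ω_n|. Then ∫|ω_{n+1}| ≤ M (C₀ θ^p)^{n+1} for all n, and ω₀ = ∑_{n=0}^∞ ω_n * ψ_{r_n} with the series converging absolutely in L¹(ℝ^d). -/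
/-!
Since `ψ_{r_{n+1}} * ω_n = ω_n − ω_{n+1}`, the partial sums of the series telescope to
`ω₀ − ω_N`. The two assumed bounds combine to `∫|ω_{n+1}| ≤ M (C₀θ^p)^{n+1}`, so the `L¹` norms
of the `ω_n` form a summable sequence: this gives both the absolute convergence of the series
(each term is bounded by `∫|ω_n| + ∫|ω_{n+1}|`) and `∫|ω_N| → 0`.
-/

open MeasureTheory Filter Topology Finset

theorem succ_le_geometric_of_le_mul_of_le_pow {a b : ℕ → ℝ} {C θ M : ℝ} {p : ℕ}
    (hC : 0 ≤ C) (hθ : 0 ≤ θ) (hb : ∀ n, b n ≤ C ^ n * M)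
    (ha : ∀ n, a (n + 1) ≤ C * (θ ^ (n + 1)) ^ p * b n) (n : ℕ) :
    a (n + 1) ≤ M * (C * θ ^ p) ^ (n + 1) :=
  calc a (n + 1) ≤ C * (θ ^ (n + 1)) ^ p * b n := ha n
    _ ≤ C * (θ ^ (n + 1)) ^ p * (C ^ n * M) := by gcongr; exact hb n
    _ = M * (C * θ ^ p) ^ (n + 1) := by rw [← pow_mul, mul_comm (n + 1), pow_mul]; ring

theorem summable_of_succ_le_geometric {a : ℕ → ℝ} {M q : ℝ} (ha : ∀ n, 0 ≤ a n)
    (hq0 : 0 ≤ q) (hq1 : q < 1) (h : ∀ n, a (n + 1) ≤ M * q ^ (n + 1)) : Summable a :=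
  (summable_nat_add_iff 1).1 <| Summable.of_nonneg_of_le (fun _ => ha _) h
    ((summable_nat_add_iff 1).2 ((summable_geometric_of_lt_one hq0 hq1).mul_left M))

section Telescoping

variable {α : Type*} [MeasurableSpace α] {μ : Measure α} {f : ℕ → α → ℝ}

theorem integral_abs_sub_le_add {g h : α → ℝ} (hg : Integrable g μ) (hh : Integrable h μ) :
    ∫ x, |g x - h x| ∂μ ≤ (∫ x, |g x| ∂μ) + ∫ x, |h x| ∂μ :=
  calc ∫ x, |g x - h x| ∂μ ≤ ∫ x, (|g x| + |h x|) ∂μ :=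
        integral_mono (hg.sub hh).abs (hg.abs.add hh.abs) fun _ => abs_sub _ _
    _ = (∫ x, |g x| ∂μ) + ∫ x, |h x| ∂μ := integral_add hg.abs hh.abs

theorem summable_integral_abs_sub_succ (hf : ∀ n, Integrable (f n) μ)
    (hs : Summable fun n => ∫ x, |f n x| ∂μ) :
    Summable fun n => ∫ x, |f n x - f (n + 1) x| ∂μ :=
  Summable.of_nonneg_of_le (fun _ => integral_nonneg fun _ => abs_nonneg _)
    (fun n => integral_abs_sub_le_add (hf n) (hf (n + 1)))
    (hs.add ((summable_nat_add_iff 1).2 hs))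

theorem tendsto_integral_abs_sub_sum_sub_succ (hs : Summable fun n => ∫ x, |f n x| ∂μ) :
    Tendsto (fun N => ∫ x, |f 0 x - ∑ n ∈ range N, (f n x - f (n + 1) x)| ∂μ) atTop (𝓝 0) := by
  have htelescope : ∀ N x, f 0 x - ∑ n ∈ range N, (f n x - f (n + 1) x) = f N x := by
    intro N x
    rw [sum_range_sub' (fun n => f n x)]
    ring
  simpa only [htelescope] using hs.tendsto_atTop_zero

end Telescoping

theorem stmt_18_general (d : ℕ) (p : ℕ) (C₀ θ M : ℝ) (hC₀ : 1 ≤ C₀)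
    (hθ0 : 0 < θ) (hcontr : C₀ * θ ^ p < 1)
    (ω ψ : ℕ → EuclideanSpace ℝ (Fin d) → ℝ)
    (hωint : ∀ n, Integrable (ω n))
    (hrec : ∀ n x, ω (n + 1) x = ω n x - ∫ y, ψ (n + 1) (x - y) * ω n y)
    (hDbound : ∀ n, (∫ x, ‖iteratedFDeriv ℝ p (ω n) x‖) ≤ C₀ ^ n * M)
    (hrecBound : ∀ n, (∫ x, |ω (n + 1) x|) ≤
      C₀ * (θ ^ (n + 1)) ^ p * ∫ x, ‖iteratedFDeriv ℝ p (ω n) x‖) :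
    (∀ n, (∫ x, |ω (n + 1) x|) ≤ M * (C₀ * θ ^ p) ^ (n + 1)) ∧
    Summable (fun n => ∫ x, |∫ y, ψ (n + 1) (x - y) * ω n y|) ∧
    Filter.Tendsto (fun N => ∫ x, |ω 0 x -
        ∑ n ∈ Finset.range N, ∫ y, ψ (n + 1) (x - y) * ω n y|)
      Filter.atTop (nhds 0) := by
  have hconv : ∀ n x, (∫ y, ψ (n + 1) (x - y) * ω n y) = ω n x - ω (n + 1) x :=
    fun n x => by linarith [hrec n x]
  have hgeom := succ_le_geometric_of_le_mul_of_le_pow (a := fun n => ∫ x, |ω n x|)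
    (by linarith) hθ0.le hDbound hrecBound
  have hsum : Summable fun n => ∫ x, |ω n x| :=
    summable_of_succ_le_geometric (fun _ => integral_nonneg fun _ => abs_nonneg _)
      (by positivity) hcontr hgeom
  simp only [hconv]
  exact ⟨hgeom, summable_integral_abs_sub_succ hωint hsum,
    tendsto_integral_abs_sub_sum_sub_succ hsum⟩

/-- Recursive kernel decomposition: given `ω_{n+1} = ω_n − ψ_{r_{n+1}} * ω_n` with
`r_n = θ^n`, `∫|∇^p ω_n| ≤ C₀^n M` and `∫|ω_{n+1}| ≤ C₀ r_{n+1}^p ∫|∇^p ω_n|`, one gets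
`∫|ω_{n+1}| ≤ M (C₀θ^p)^{n+1}`, and `ω₀ = ∑_n ψ_{r_{n+1}} * ω_n` with the series converging
absolutely in `L¹(ℝ^d)`. -/
theorem stmt_18 (d : ℕ) (p : ℕ) (C₀ θ M : ℝ) (hC₀ : 1 ≤ C₀) (hp : 1 ≤ p)
    (hθ0 : 0 < θ) (hθ1 : θ < 1) (hcontr : C₀ * θ ^ p < 1) (hM : 0 ≤ M)
    (ω ψ : ℕ → EuclideanSpace ℝ (Fin d) → ℝ)
    (hωint : ∀ n, Integrable (ω n))
    (hψint : ∀ n, Integrable (ψ n))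
    (hψbound : ∃ K : ℝ, ∀ n, (∫ x, |ψ n x|) ≤ K)
    (hrec : ∀ n x, ω (n + 1) x = ω n x - ∫ y, ψ (n + 1) (x - y) * ω n y)
    (hDbound : ∀ n, (∫ x, ‖iteratedFDeriv ℝ p (ω n) x‖) ≤ C₀ ^ n * M)
    (hrecBound : ∀ n, (∫ x, |ω (n + 1) x|) ≤
      C₀ * (θ ^ (n + 1)) ^ p * ∫ x, ‖iteratedFDeriv ℝ p (ω n) x‖) :
    (∀ n, (∫ x, |ω (n + 1) x|) ≤ M * (C₀ * θ ^ p) ^ (n + 1)) ∧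
    Summable (fun n => ∫ x, |∫ y, ψ (n + 1) (x - y) * ω n y|) ∧
    Filter.Tendsto (fun N => ∫ x, |ω 0 x -
        ∑ n ∈ Finset.range N, ∫ y, ψ (n + 1) (x - y) * ω n y|)
      Filter.atTop (nhds 0) :=
  stmt_18_general d p C₀ θ M hC₀ hθ0 hcontr ω ψ hωint hrec hDbound hrecBound
end
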